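/- arXiv:1505.05537 — 2 statements merged into one kernel-verified Lean document; each statement's English description precedes it below -/
import Mathlib

section
/- Let Ψ be the Laplacian of a connected undirected weighted graph on n nodes (symmetric, PSD, Ψ𝟙 = 0, kernel = span{𝟙}) and let ℒ be obtained from Ψ by zeroing the last row. Then L̄ = Ψℒ + ℒᵀΨ is symmetric positive semidefinite, and xᵀL̄x = 0 if and only if x is a scalar multiple of 𝟙. -/
open Matrix

theorem stmt_4 (n : ℕ) (Ψ : Matrix (Fin (n + 1)) (Fin (n + 1)) ℝ)
    (hsymm : Ψ.IsSymm) (hpsd : Ψ.PosSemidef)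
    (hker : ∀ x : Fin (n + 1) → ℝ,
      Ψ *ᵥ x = 0 ↔ ∃ c : ℝ, x = c • (1 : Fin (n + 1) → ℝ))
    (ℒ : Matrix (Fin (n + 1)) (Fin (n + 1)) ℝ)
    (hℒ : ∀ i j, ℒ i j = if i = Fin.last n then 0 else Ψ i j) :
    (Ψ * ℒ + ℒᵀ * Ψ).PosSemidef ∧
      ∀ x : Fin (n + 1) → ℝ,
        x ⬝ᵥ ((Ψ * ℒ + ℒᵀ * Ψ) *ᵥ x) = 0 ↔ ∃ c : ℝ, x = c • (1 : Fin (n + 1) → ℝ) := by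
  -- Key identity: Ψ * ℒ = ℒᵀ * ℒ and ℒᵀ * Ψ = ℒᵀ * ℒ
  have h1 : Ψ * ℒ = ℒᵀ * ℒ := by
    ext i j
    simp only [mul_apply, transpose_apply]
    apply Finset.sum_congr rfl
    intro k _
    by_cases hk : k = Fin.last n
    · simp [hℒ, hk]
    · simp only [hℒ, hk, if_false]
      rw [hsymm.apply i k]
  have h2 : ℒᵀ * Ψ = ℒᵀ * ℒ := by
    ext i j
    simp only [mul_apply, transpose_apply]
    apply Finset.sum_congr rfl
    intro k _
    by_cases hk : k = Fin.last n
    · simp [hℒ, hk]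
    · simp only [hℒ, hk, if_false]
  have hsum : Ψ * ℒ + ℒᵀ * Ψ = ℒᵀ * ℒ + ℒᵀ * ℒ := by rw [h1, h2]
  have hpsdL : (ℒᵀ * ℒ).PosSemidef := by
    have := Matrix.posSemidef_conjTranspose_mul_self ℒ
    simpa [Matrix.conjTranspose_eq_transpose_of_trivial] using this
  -- Ψ *ᵥ 1 = 0
  have hone : Ψ *ᵥ (1 : Fin (n + 1) → ℝ) = 0 := by
    rw [hker]
    exact ⟨1, by simp⟩
  -- mulVec with ℒ
  have hLmv : ∀ x : Fin (n + 1) → ℝ, ℒ *ᵥ x =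
      fun i => if i = Fin.last n then 0 else (Ψ *ᵥ x) i := by
    intro x
    funext i
    by_cases hi : i = Fin.last n
    · simp [mulVec, dotProduct, hℒ, hi]
    · simp [mulVec, dotProduct, hℒ, hi]
  -- quadratic form
  have hquad : ∀ x : Fin (n + 1) → ℝ,
      x ⬝ᵥ ((Ψ * ℒ + ℒᵀ * Ψ) *ᵥ x) = (ℒ *ᵥ x) ⬝ᵥ (ℒ *ᵥ x) + (ℒ *ᵥ x) ⬝ᵥ (ℒ *ᵥ x) := by
    intro x
    rw [hsum]
    rw [add_mulVec, dotProduct_add]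
    have : x ⬝ᵥ ((ℒᵀ * ℒ) *ᵥ x) = (ℒ *ᵥ x) ⬝ᵥ (ℒ *ᵥ x) := by
      rw [← mulVec_mulVec, dotProduct_mulVec, vecMul_transpose]
    rw [this]
  -- kernel characterization
  have hker2 : ∀ x : Fin (n + 1) → ℝ, ℒ *ᵥ x = 0 ↔ Ψ *ᵥ x = 0 := by
    intro x
    constructor
    · intro h
      have hzero : ∀ i, i ≠ Fin.last n → (Ψ *ᵥ x) i = 0 := by
        intro i hi
        have := congrFun h i
        rw [hLmv x] at this
        simpa [hi] using this
      have hsum0 : ∑ i, (Ψ *ᵥ x) i = 0 := by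
        have : (1 : Fin (n + 1) → ℝ) ⬝ᵥ (Ψ *ᵥ x) = 0 := by
          rw [dotProduct_mulVec]
          have : (1 : Fin (n + 1) → ℝ) ᵥ* Ψ = 0 := by
            rw [← hsymm.eq, vecMul_transpose, hone]
          rw [this, zero_dotProduct]
        simpa [dotProduct] using this
      have hlast : (Ψ *ᵥ x) (Fin.last n) = 0 := by
        rw [← hsum0]
        rw [Finset.sum_eq_single (Fin.last n)]
        · intro b _ hb; exact hzero b hb
        · simp
      funext i
      by_cases hi : i = Fin.last n
      · simpa [hi] using hlast
      · exact hzero i hi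
    · intro h
      rw [hLmv x, h]
      funext i
      simp
  constructor
  · rw [hsum]
    exact hpsdL.add hpsdL
  · intro x
    rw [hquad x]
    have hnn : 0 ≤ (ℒ *ᵥ x) ⬝ᵥ (ℒ *ᵥ x) := by
      simpa [dotProduct] using Finset.sum_nonneg (fun i _ => mul_self_nonneg ((ℒ *ᵥ x) i))
    constructor
    · intro h
      have h0 : (ℒ *ᵥ x) ⬝ᵥ (ℒ *ᵥ x) = 0 := by linarith
      have := (dotProduct_self_eq_zero).mp h0
      exact (hker x).mp ((hker2 x).mp this)
    · intro hc
      have := (hker2 x).mpr ((hker x).mpr hc)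
      rw [this]
      simp
end

section
/- Let ℒ ∈ ℝ^{n×n} be a matrix with nonpositive off-diagonal entries, zero row sums (ℒ𝟙 = 0), whose associated directed graph contains a spanning tree rooted at node n, and whose last row is zero. Writing ℒ = [[L₁₁, L₁₂],[0, 0]], the matrix L₁₁ has all eigenvalues with positive real part; in particular if additionally L₁₁ is symmetric, L₁₁ is positive definite. -/
open Matrix

lemma key_aux (n : ℕ) (ℒ : Matrix (Fin (n + 1)) (Fin (n + 1)) ℝ)
    (hoff : ∀ i j, i ≠ j → ℒ i j ≤ 0)
    (hrow : ℒ *ᵥ (1 : Fin (n + 1) → ℝ) = 0)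
    (hlast : ∀ j, ℒ (Fin.last n) j = 0)
    (htree : ∀ i : Fin (n + 1),
      Relation.ReflTransGen (fun j i => i ≠ j ∧ ℒ i j < 0) (Fin.last n) i)
    (μ : ℂ) (hμ : μ.re ≤ 0) (v : Fin n → ℂ)
    (hv : ((ℒ.submatrix Fin.castSucc Fin.castSucc).map (Complex.ofReal)) *ᵥ v = μ • v) :
    v = 0 := by
  classical
  set w : Fin (n + 1) → ℂ := Fin.snoc v 0 with hw
  have hwl : w (Fin.last n) = 0 := Fin.snoc_last _ _
  have hwc : ∀ j : Fin n, w j.castSucc = v j := fun j => Fin.snoc_castSucc _ _ j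
  -- full eigen-equation
  have heq : ∀ i : Fin n, ∑ j : Fin (n + 1), (ℒ i.castSucc j : ℂ) * w j = μ * w i.castSucc := by
    intro i
    have h1 := congrFun hv i
    simp only [mulVec, dotProduct, Matrix.map_apply, submatrix_apply, Pi.smul_apply,
      smul_eq_mul] at h1
    rw [Fin.sum_univ_castSucc]
    simp only [hwl, hwc, mul_zero, add_zero]
    exact h1
  have hrowsum : ∀ i : Fin (n + 1), ∑ j, ℒ i j = 0 := by
    intro i
    have := congrFun hrow i
    simpa [mulVec, dotProduct] using this
  obtain ⟨i₀, -, hmax⟩ := Finset.exists_max_image Finset.univ (fun i => ‖w i‖)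
    ⟨Fin.last n, Finset.mem_univ _⟩
  set M := ‖w i₀‖ with hMdef
  have hM : ∀ j, ‖w j‖ ≤ M := fun j => hmax j (Finset.mem_univ _)
  have hM0 : 0 ≤ M := norm_nonneg _
  -- propagation of maximality along incoming edges
  have prop : ∀ i : Fin n, ‖w i.castSucc‖ = M →
      ∀ j, j ≠ i.castSucc → ℒ i.castSucc j < 0 → ‖w j‖ = M := by
    intro i hi j hji hℒ
    set d : ℝ := ℒ i.castSucc i.castSucc with hd
    set E : Finset (Fin (n + 1)) := Finset.univ.erase i.castSucc with hE
    have hsplit : (d : ℂ) * w i.castSucc + ∑ k ∈ E, (ℒ i.castSucc k : ℂ) * w k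
        = μ * w i.castSucc := by
      rw [← heq i, ← Finset.add_sum_erase _ _ (Finset.mem_univ i.castSucc)]
    have key1 : ((d : ℂ) - μ) * w i.castSucc = ∑ k ∈ E, ((-ℒ i.castSucc k : ℝ) : ℂ) * w k := by
      have h2 : ∑ k ∈ E, ((-ℒ i.castSucc k : ℝ) : ℂ) * w k
          = -∑ k ∈ E, (ℒ i.castSucc k : ℂ) * w k := by
        rw [← Finset.sum_neg_distrib]
        refine Finset.sum_congr rfl fun k _ => ?_
        push_cast
        ring
      rw [h2]
      linear_combination hsplit
    have hdsum : d = ∑ k ∈ E, (-ℒ i.castSucc k) := by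
      have h3 := hrowsum i.castSucc
      rw [← Finset.add_sum_erase _ _ (Finset.mem_univ i.castSucc)] at h3
      rw [Finset.sum_neg_distrib]
      linarith
    have hnn : ∀ k ∈ E, 0 ≤ -ℒ i.castSucc k := fun k hk =>
      neg_nonneg.2 (hoff _ _ (Ne.symm (Finset.ne_of_mem_erase hk)))
    have hd0 : 0 ≤ d := hdsum ▸ Finset.sum_nonneg hnn
    have h1 : ‖(d : ℂ) - μ‖ * M
        = ‖∑ k ∈ E, ((-ℒ i.castSucc k : ℝ) : ℂ) * w k‖ := by
      rw [← key1, norm_mul, hi]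
    have h2 : ‖∑ k ∈ E, ((-ℒ i.castSucc k : ℝ) : ℂ) * w k‖
        ≤ ∑ k ∈ E, (-ℒ i.castSucc k) * ‖w k‖ := by
      refine (norm_sum_le _ _).trans (le_of_eq (Finset.sum_congr rfl fun k hk => ?_))
      rw [norm_mul, Complex.norm_real, Real.norm_eq_abs, abs_of_nonneg (hnn k hk)]
    have h3 : ∑ k ∈ E, (-ℒ i.castSucc k) * ‖w k‖
        ≤ ∑ k ∈ E, (-ℒ i.castSucc k) * M :=
      Finset.sum_le_sum fun k hk => mul_le_mul_of_nonneg_left (hM k) (hnn k hk)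
    have h4 : ∑ k ∈ E, (-ℒ i.castSucc k) * M = d * M := by
      rw [← Finset.sum_mul, ← hdsum]
    have h5 : d ≤ ‖(d : ℂ) - μ‖ := by
      have habs := Complex.abs_re_le_norm ((d : ℂ) - μ)
      have hre : ((d : ℂ) - μ).re = d - μ.re := by simp
      rw [hre] at habs
      have : d - μ.re ≤ |d - μ.re| := le_abs_self _
      linarith
    have lower : d * M ≤ ‖(d : ℂ) - μ‖ * M :=
      mul_le_mul_of_nonneg_right h5 hM0
    have heqsum : ∑ k ∈ E, (-ℒ i.castSucc k) * ‖w k‖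
        = ∑ k ∈ E, (-ℒ i.castSucc k) * M := by
      have := h1 ▸ lower
      linarith [h2, h3]
    have hzero : ∑ k ∈ E, (-ℒ i.castSucc k) * (M - ‖w k‖) = 0 := by
      simp only [mul_sub, Finset.sum_sub_distrib]
      linarith
    have hterm := (Finset.sum_eq_zero_iff_of_nonneg fun k hk =>
      mul_nonneg (hnn k hk) (by linarith [hM k])).1 hzero j
      (Finset.mem_erase.2 ⟨hji, Finset.mem_univ _⟩)
    rcases mul_eq_zero.1 hterm with h | h
    · linarith
    · linarith
  -- reachability: the leader attains the maximum
  have reach : ∀ i, Relation.ReflTransGen (fun j i => i ≠ j ∧ ℒ i j < 0) (Fin.last n) i →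
      ‖w i‖ = M → ‖w (Fin.last n)‖ = M := by
    intro i h
    induction h with
    | refl => exact id
    | @tail b c _ hbc ih =>
      intro hc
      have hcne : c ≠ Fin.last n := by
        rintro rfl
        have := hlast b
        linarith [hbc.2]
      obtain ⟨c', rfl⟩ := Fin.exists_castSucc_eq.2 hcne
      exact ih (prop c' hc b (Ne.symm hbc.1) hbc.2)
  have hlastM : ‖w (Fin.last n)‖ = M := reach i₀ (htree i₀) rfl
  have hMz : M = 0 := by rw [← hlastM, hwl, norm_zero]
  funext j
  have h6 : ‖v j‖ ≤ 0 := by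
    have := hM j.castSucc
    rwa [hwc, hMz] at this
  have : ‖v j‖ = 0 := le_antisymm h6 (norm_nonneg _)
  simpa using norm_eq_zero.1 this

theorem stmt_16 (n : ℕ) (ℒ : Matrix (Fin (n + 1)) (Fin (n + 1)) ℝ)
    (hoff : ∀ i j, i ≠ j → ℒ i j ≤ 0)
    (hrow : ℒ *ᵥ (1 : Fin (n + 1) → ℝ) = 0)
    (hlast : ∀ j, ℒ (Fin.last n) j = 0)
    (htree : ∀ i : Fin (n + 1),
      Relation.ReflTransGen (fun j i => i ≠ j ∧ ℒ i j < 0) (Fin.last n) i) :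
    (∀ μ : ℂ, Module.End.HasEigenvalue
        (Matrix.toLin' ((ℒ.submatrix Fin.castSucc Fin.castSucc).map (Complex.ofReal))) μ →
        0 < μ.re) ∧
      ((ℒ.submatrix Fin.castSucc Fin.castSucc).IsSymm →
        (ℒ.submatrix Fin.castSucc Fin.castSucc).PosDef) := by
  classical
  set A := ℒ.submatrix Fin.castSucc Fin.castSucc with hA
  -- real version of the key lemma
  have hcx : ∀ (c : ℝ), c ≤ 0 → ∀ x : Fin n → ℝ, A *ᵥ x = c • x → x = 0 := by
    intro c hc x hx
    have hcv : (A.map Complex.ofReal) *ᵥ (fun j => (x j : ℂ)) = (c : ℂ) • (fun j => (x j : ℂ)) := by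
      funext i
      have := congrFun hx i
      simp only [mulVec, dotProduct, Pi.smul_apply, smul_eq_mul] at this ⊢
      simp only [Matrix.map_apply]
      exact_mod_cast congrArg (Complex.ofReal) this
    have h0 := key_aux n ℒ hoff hrow hlast htree (c : ℂ) (by simpa using hc) _ hcv
    funext j
    have h1 : (x j : ℂ) = 0 := by simpa using congrFun h0 j
    simp only [Pi.zero_apply]
    exact_mod_cast h1
  constructor
  · intro μ hμ
    by_contra h
    push_neg at h
    obtain ⟨v, hv⟩ := hμ.exists_hasEigenvector
    have hmul : (A.map Complex.ofReal) *ᵥ v = μ • v := by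
      have := hv.apply_eq_smul
      rwa [Matrix.toLin'_apply] at this
    exact hv.2 (key_aux n ℒ hoff hrow hlast htree μ h v hmul)
  · intro hsym
    have hherm : A.IsHermitian := by
      rw [Matrix.IsHermitian, conjTranspose]
      exact (conjTranspose_eq_transpose_of_trivial A).trans hsym
    have heig : ∀ i, 0 ≤ hherm.eigenvalues i := by
      intro i
      by_contra h
      push_neg at h
      have hvec := hherm.mulVec_eigenvectorBasis i
      have := hcx _ h.le _ hvec
      exact hherm.eigenvectorBasis.orthonormal.ne_zero i (by ext k; exact congrFun this k)
    have hpsd : A.PosSemidef := hherm.posSemidef_iff_eigenvalues_nonneg.2 heig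
    refine PosDef.of_dotProduct_mulVec_pos hherm fun x hx => ?_
    rcases (hpsd.dotProduct_mulVec_nonneg x).lt_or_eq with h | h
    · exact h
    · exfalso
      have hAx : A *ᵥ x = 0 := (hpsd.dotProduct_mulVec_zero_iff x).1 h.symm
      exact hx (hcx 0 le_rfl x (by simpa using hAx))
end
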